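/- Let n ≥ 2, let M be a universal n-linear order, let m ∈ {1, …, n}, and let g ∈ Aut(M). If there exist u, v ∈ M with u <_m v such that g a = a for every a with u <_m a and a <_m v, then g is the identity automorphism. -/

import Mathlib

/-- A set `M` equipped with `n` linear orders `<_1, …, <_n`. -/
structure NLinear (n : ℕ) (M : Type*) where
  lt : Fin n → M → M → Prop
  irrefl : ∀ i a, ¬ lt i a a
  trans : ∀ i a b c, lt i a b → lt i b c → lt i a c
  total : ∀ i a b, lt i a b ∨ a = b ∨ lt i b a

/-- `M` with its `n` linear orders is a universal `n`-linear order: it is countably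
infinite and has the one-point extension property. -/
structure IsUniversalNLinear (n : ℕ) (M : Type*) (L : NLinear n M) : Prop where
  countable : Countable M
  infinite : Infinite M
  extension : ∀ (A : Finset M) (D : Fin n → Set M),
    (∀ i, D i ⊆ ↑A) →
    (∀ i, ∀ a ∈ A, ∀ b ∈ A, L.lt i a b → b ∈ D i → a ∈ D i) →
    ∃ x, x ∉ A ∧ ∀ i, ∀ a ∈ A, (L.lt i a x ↔ a ∈ D i)

/-- The automorphism group of an `n`-linearly ordered set, as a subgroup of `Equiv.Perm M`. -/
def NLinear.aut {n : ℕ} {M : Type*} (L : NLinear n M) : Subgroup (Equiv.Perm M) where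
  carrier := {g | ∀ i a b, L.lt i a b ↔ L.lt i (g a) (g b)}
  one_mem' := fun _ _ _ => Iff.rfl
  mul_mem' := by
    intro g h hg hh i a b
    exact (hh i a b).trans (hg i (h a) (h b))
  inv_mem' := by
    intro g hg i a b
    simpa using (hg i (g⁻¹ a) (g⁻¹ b)).symm

/-- `f` has a single `+`-orbital with respect to `<_m`. -/
def NLinear.SinglePlus {n : ℕ} {M : Type*} (L : NLinear n M) (m : Fin n)
    (f : Equiv.Perm M) : Prop :=
  ∃ a : M, L.lt m a (f a) ∧ (∀ x : M, ∃ k : ℤ, L.lt m x ((f ^ k) a)) ∧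
    (∀ x : M, ∃ k : ℤ, L.lt m ((f ^ k) a) x)

/-- `f` has a single `−`-orbital with respect to `<_m`. -/
def NLinear.SingleMinus {n : ℕ} {M : Type*} (L : NLinear n M) (m : Fin n)
    (f : Equiv.Perm M) : Prop :=
  ∃ a : M, L.lt m (f a) a ∧ (∀ x : M, ∃ k : ℤ, L.lt m x ((f ^ k) a)) ∧
    (∀ x : M, ∃ k : ℤ, L.lt m ((f ^ k) a) x)

/-- `f` has a `+`-orbital unbounded above with respect to `<_m`. -/
def NLinear.PlusUnbAbove {n : ℕ} {M : Type*} (L : NLinear n M) (m : Fin n)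
    (f : Equiv.Perm M) : Prop :=
  ∃ a : M, L.lt m a (f a) ∧ ∀ x : M, ∃ k : ℤ, L.lt m x ((f ^ k) a)

/-- `f` has a `−`-orbital unbounded below with respect to `<_m`. -/
def NLinear.MinusUnbBelow {n : ℕ} {M : Type*} (L : NLinear n M) (m : Fin n)
    (f : Equiv.Perm M) : Prop :=
  ∃ b : M, L.lt m (f b) b ∧ ∀ x : M, ∃ k : ℤ, L.lt m ((f ^ k) b) x

/-!
If `g` moved some `x`, pick another order `<_i` (possible since `n ≥ 2`). By the extension
property there is a point `w` inside the `<_m`-interval `(u, v)` that lies strictly between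
`x` and `g x` in `<_i`. Then `g` fixes `w`, so `x` and `g x` must lie on the same `<_i`-side
of `w`, a contradiction.
-/

namespace NLinear

variable {n : ℕ} {M : Type*} (L : NLinear n M)

theorem lt_asymm {i : Fin n} {a b : M} (hab : L.lt i a b) : ¬ L.lt i b a :=
  fun hba => L.irrefl i a (L.trans i a b a hab hba)

theorem lt_or_lt_of_ne (i : Fin n) {a b : M} (hab : a ≠ b) : L.lt i a b ∨ L.lt i b a :=
  (L.total i a b).imp_right (Or.resolve_left · hab)

theorem lt_of_not_lt_of_ne {i : Fin n} {a b : M} (hba : ¬ L.lt i b a) (hab : a ≠ b) :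
    L.lt i a b :=
  (L.lt_or_lt_of_ne i hab).resolve_right hba

theorem lt_apply_iff_of_apply_eq {g : Equiv.Perm M} (hg : g ∈ L.aut) {w : M} (hw : g w = w)
    (i : Fin n) (x : M) : L.lt i (g x) w ↔ L.lt i x w := by
  rw [hg i x w, hw]

end NLinear

namespace IsUniversalNLinear

variable {n : ℕ} {M : Type*} {L : NLinear n M} (hL : IsUniversalNLinear n M L)
include hL

theorem exists_forall_mem_Ioo (S : Set (Fin n)) (lo hi : Fin n → M)
    (h : ∀ j ∈ S, L.lt j (lo j) (hi j)) :
    ∃ w, ∀ j ∈ S, L.lt j (lo j) w ∧ L.lt j w (hi j) := by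
  classical
  let A : Finset M := Finset.univ.image lo ∪ Finset.univ.image hi
  have hlo : ∀ j, lo j ∈ A := fun j => by simp [A]
  have hhi : ∀ j, hi j ∈ A := fun j => by simp [A]
  obtain ⟨w, hwA, hw⟩ := hL.extension A (fun j => {a | j ∈ S ∧ a ∈ A ∧ L.lt j a (hi j)})
    (fun _ _ ha => ha.2.1)
    (fun j a ha _ _ hab hb => ⟨hb.1, ha, L.trans j a _ _ hab hb.2.2⟩)
  refine ⟨w, fun j hj => ⟨(hw j _ (hlo j)).2 ⟨hj, hlo j, h j hj⟩, ?_⟩⟩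
  refine L.lt_of_not_lt_of_ne (fun hhiw => ?_) (fun hwhi => hwA (hwhi ▸ hhi j))
  exact L.irrefl j _ ((hw j _ (hhi j)).1 hhiw).2.2

theorem exists_between_of_ne {m i : Fin n} (him : i ≠ m) {u v p q : M}
    (huv : L.lt m u v) (hpq : L.lt i p q) :
    ∃ w, L.lt m u w ∧ L.lt m w v ∧ L.lt i p w ∧ L.lt i w q := by
  obtain ⟨w, hw⟩ := hL.exists_forall_mem_Ioo {m, i}
    (Function.update (fun _ => p) m u) (Function.update (fun _ => q) m v)
    (by simp [Function.update_of_ne him, huv, hpq])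
  obtain ⟨hum, hvm⟩ := hw m (by simp)
  obtain ⟨hpi, hqi⟩ := hw i (by simp)
  simp only [Function.update_self, Function.update_of_ne him] at hum hvm hpi hqi
  exact ⟨w, hum, hvm, hpi, hqi⟩

end IsUniversalNLinear

/-- For `n ≥ 2`, if an automorphism `g` of a universal `n`-linear
order fixes every point of a nonempty open `<_m`-interval `(u, v)`, then `g` is the
identity. -/
theorem stmt12 {n : ℕ} (hn : 2 ≤ n) {M : Type*} (L : NLinear n M)
    (hL : IsUniversalNLinear n M L) (m : Fin n) (g : L.aut)
    (u v : M) (huv : L.lt m u v)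
    (hfix : ∀ a : M, L.lt m u a → L.lt m a v → (g : Equiv.Perm M) a = a) :
    g = 1 := by
  have : Nontrivial (Fin n) := Fin.nontrivial_iff_two_le.mpr hn
  obtain ⟨i, him⟩ := exists_ne m
  refine Subtype.ext <| Equiv.ext fun x => by_contra fun hx => ?_
  rcases L.lt_or_lt_of_ne i hx with hlt | hlt
  · obtain ⟨w, huw, hwv, hgxw, hwx⟩ := hL.exists_between_of_ne him huv hlt
    have hgw := L.lt_apply_iff_of_apply_eq g.2 (hfix w huw hwv) i x
    exact L.lt_asymm (hgw.1 hgxw) hwx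
  · obtain ⟨w, huw, hwv, hxw, hwgx⟩ := hL.exists_between_of_ne him huv hlt
    have hgw := L.lt_apply_iff_of_apply_eq g.2 (hfix w huw hwv) i x
    exact L.lt_asymm (hgw.2 hxw) hwgx
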